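/- Let G be an m×n real matrix, Γ an m×m real symmetric positive definite matrix, C₀ an n×n real symmetric positive semidefinite matrix, y ∈ ℝᵐ, ū₀ ∈ ℝⁿ and η > 0. Assume ‖Γ^{-1/2}(y − G ū₀)‖ > η, let 0 < ρ < 1/‖(G C₀ G^T + Γ)^{1/2} Γ^{-1/2}‖², and let τ > max{ ‖(G C₀ G^T + Γ)^{-1/2} Γ^{1/2}‖², 1/ρ } · ‖Γ^{-1/2}(y − G ū₀)‖ / η. Define ū₁ = ū₀ + C₀ G^T (G C₀ G^T + Γ)^{-1}(y − G ū₀). Then: (a) ρ < 1 and τ > 1/ρ; (b) the parameter α = 1 satisfies the discrepancy condition ρ‖Γ^{-1/2}(y − G ū₀)‖ ≤ ‖Γ^{1/2}(G C₀ G^T + Γ)^{-1}(y − G ū₀)‖; and (c) ‖Γ^{-1/2}(y − G ū₁)‖ < τ η, i.e. the IR-ES stopping criterion (2.2) is satisfied after one iteration. -/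

import Mathlib

open Matrix

/-- The Euclidean norm of a vector in `ℝⁿ`. -/
noncomputable def euclNorm {k : ℕ} (v : Fin k → ℝ) : ℝ :=
  ‖(WithLp.equiv 2 (Fin k → ℝ)).symm v‖

/-- The operator (spectral) norm of a matrix, induced by the Euclidean norms. -/
noncomputable def l2OpNorm {k l : ℕ} (A : Matrix (Fin k) (Fin l) ℝ) : ℝ :=
  ‖LinearMap.toContinuousLinearMap (Matrix.toEuclideanLin A)‖

/-- The positive semidefinite square root of a positive semidefinite matrix (the definition
of `Matrix.PosSemidef.sqrt` in the older Mathlib, which has since been removed). -/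
noncomputable def Matrix.PosSemidef.sqrt {n : Type*} [Fintype n] [DecidableEq n]
    {A : Matrix n n ℝ} (hA : A.PosSemidef) : Matrix n n ℝ :=
  hA.1.eigenvectorUnitary.1 * diagonal (Real.sqrt ∘ hA.1.eigenvalues) *
  (star hA.1.eigenvectorUnitary : Matrix n n ℝ)

/-! Write `B = Γ^{1/2}`, `A = S^{1/2}` with `S = G C₀ Gᵀ + Γ`, and `r = y − G ū₀`.
Since `(A B⁻¹)ᵀ (A B⁻¹) = 1 + B⁻¹ (G C₀ Gᵀ) B⁻¹ ⪰ 1`, the operator `A B⁻¹` has norm at least one,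
which gives (a). The residual after one step is `y − G ū₁ = Γ S⁻¹ r`, and the factorizations
`B⁻¹ = (B⁻¹ A)(A B⁻¹)(B S⁻¹)` and `B⁻¹ Γ S⁻¹ = (B A⁻¹)(A⁻¹ B) B⁻¹`, together with `‖Mᵀ‖ = ‖M‖`
and the symmetry of `A` and `B`, bound `‖B⁻¹ r‖` by `‖A B⁻¹‖² ‖B S⁻¹ r‖` and `‖B⁻¹ Γ S⁻¹ r‖` by
`‖A⁻¹ B‖² ‖B⁻¹ r‖`; (b) and (c) then follow from the choice of `ρ` and `τ`. -/

namespace Matrix.PosSemidef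
variable {n : Type*} [Fintype n] [DecidableEq n] {A : Matrix n n ℝ}

theorem sqrt_eq_cfc (hA : A.PosSemidef) : hA.sqrt = cfc Real.sqrt A := by
  rw [hA.1.cfc_eq]; rfl

theorem sqrt_mul_self (hA : A.PosSemidef) : hA.sqrt * hA.sqrt = A := by
  rw [sqrt_eq_cfc, ← cfc_mul Real.sqrt Real.sqrt A]
  conv_rhs => rw [← cfc_id' ℝ A hA.1.isSelfAdjoint]
  refine cfc_congr fun x hx => Real.mul_self_sqrt ?_
  obtain ⟨i, rfl⟩ := hA.1.spectrum_real_eq_range_eigenvalues ▸ hx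
  exact hA.eigenvalues_nonneg i

theorem transpose_sqrt (hA : A.PosSemidef) : hA.sqrtᵀ = hA.sqrt := by
  have : IsSelfAdjoint hA.sqrt := by rw [sqrt_eq_cfc]; exact cfc_predicate _ _
  simpa [IsSelfAdjoint, star_eq_conjTranspose] using this

end Matrix.PosSemidef

theorem Matrix.PosDef.isUnit_det_sqrt {n : Type*} [Fintype n] [DecidableEq n]
    {A : Matrix n n ℝ} (hA : A.PosDef) : IsUnit hA.posSemidef.sqrt.det := by
  rw [← isUnit_iff_isUnit_det, PosSemidef.sqrt_eq_cfc,
    isUnit_cfc_iff Real.sqrt A (ha := hA.1.isSelfAdjoint)]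
  intro x hx
  obtain ⟨i, rfl⟩ := hA.1.spectrum_real_eq_range_eigenvalues ▸ hx
  exact (Real.sqrt_pos.2 (hA.eigenvalues_pos i)).ne'

namespace Matrix
variable {ι κ R : Type*} [Fintype ι] [DecidableEq ι] [Fintype κ] [CommRing R]

theorem transpose_mul_inv_mul_mul_inv {A B D : Matrix ι ι R} (hB : IsUnit B.det)
    (hAB : Aᵀ * A = Bᵀ * B + D) :
    (A * B⁻¹)ᵀ * (A * B⁻¹) = 1 + B⁻¹ᵀ * D * B⁻¹ := by
  have hBBi : B⁻¹ᵀ * Bᵀ * (B * B⁻¹) = 1 := by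
    rw [← transpose_mul, mul_nonsing_inv _ hB, transpose_one, Matrix.one_mul]
  rw [transpose_mul, ← hBBi]
  simp only [Matrix.mul_assoc, ← Matrix.mul_add]
  rw [← Matrix.mul_assoc Aᵀ, hAB, Matrix.add_mul, Matrix.mul_assoc Bᵀ]

theorem inv_eq_inv_mul_mul_mul_inv_mul_mul_mul_inv {A B S : Matrix ι ι R} (hB : IsUnit B.det)
    (hS : IsUnit S.det) (hA : A * A = S) :
    B⁻¹ = B⁻¹ * A * (A * B⁻¹) * (B * S⁻¹) := by
  simp only [Matrix.mul_assoc]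
  rw [← Matrix.mul_assoc B⁻¹ B, nonsing_inv_mul _ hB, Matrix.one_mul, ← Matrix.mul_assoc A,
    hA, mul_nonsing_inv _ hS, Matrix.mul_one]

theorem inv_mul_mul_inv_eq {A B Γ S : Matrix ι ι R} (hB : IsUnit B.det) (hBΓ : B * B = Γ)
    (hA : A * A = S) :
    B⁻¹ * (Γ * S⁻¹) = B * A⁻¹ * (A⁻¹ * B) * B⁻¹ := by
  rw [← hBΓ, ← hA, mul_inv_rev]
  simp only [Matrix.mul_assoc]
  rw [← Matrix.mul_assoc B⁻¹ B, nonsing_inv_mul _ hB, Matrix.one_mul, mul_nonsing_inv _ hB,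
    Matrix.mul_one]

theorem sub_mulVec_add_gain_mulVec {G : Matrix ι κ R} {C : Matrix κ κ R} {Γ : Matrix ι ι R}
    (hS : IsUnit (G * C * Gᵀ + Γ).det) (y : ι → R) (u : κ → R) :
    y - G *ᵥ (u + (C * Gᵀ * (G * C * Gᵀ + Γ)⁻¹) *ᵥ (y - G *ᵥ u)) =
      (Γ * (G * C * Gᵀ + Γ)⁻¹) *ᵥ (y - G *ᵥ u) := by
  have hΓ : Γ * (G * C * Gᵀ + Γ)⁻¹ = 1 - G * (C * Gᵀ * (G * C * Gᵀ + Γ)⁻¹) := by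
    rw [eq_sub_iff_add_eq, ← Matrix.mul_assoc, ← Matrix.mul_assoc, ← Matrix.add_mul,
      add_comm, mul_nonsing_inv _ hS]
  rw [hΓ, Matrix.sub_mulVec, Matrix.one_mulVec, mulVec_add, mulVec_mulVec]
  abel

end Matrix

section EuclideanNorms
variable {k l : ℕ}

theorem euclNorm_nonneg (v : Fin k → ℝ) : 0 ≤ euclNorm v :=
  norm_nonneg _

theorem euclNorm_sq (v : Fin k → ℝ) : euclNorm v ^ 2 = v ⬝ᵥ v := by
  rw [euclNorm, EuclideanSpace.norm_sq_eq]
  simp [dotProduct, sq]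

theorem euclNorm_mulVec_le (A : Matrix (Fin k) (Fin l) ℝ) (v : Fin l → ℝ) :
    euclNorm (A *ᵥ v) ≤ l2OpNorm A * euclNorm v :=
  (LinearMap.toContinuousLinearMap (toEuclideanLin A)).le_opNorm _

theorem euclNorm_mulVec_mulVec_le {j : ℕ} (A : Matrix (Fin j) (Fin k) ℝ)
    (B : Matrix (Fin k) (Fin l) ℝ) (v : Fin l → ℝ) :
    euclNorm (A *ᵥ B *ᵥ v) ≤ l2OpNorm A * (l2OpNorm B * euclNorm v) :=
  (euclNorm_mulVec_le A _).trans
    (mul_le_mul_of_nonneg_left (euclNorm_mulVec_le B v) (norm_nonneg _))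

open scoped Matrix.Norms.L2Operator in
theorem l2OpNorm_transpose (A : Matrix (Fin k) (Fin l) ℝ) : l2OpNorm Aᵀ = l2OpNorm A :=
  Matrix.l2_opNorm_conjTranspose A

theorem euclNorm_le_euclNorm_mulVec {M P : Matrix (Fin k) (Fin k) ℝ} (hP : P.PosSemidef)
    (hM : Mᵀ * M = 1 + P) (v : Fin k → ℝ) : euclNorm v ≤ euclNorm (M *ᵥ v) := by
  refine (pow_le_pow_iff_left₀ (euclNorm_nonneg _) (euclNorm_nonneg _) two_ne_zero).1 ?_
  have hquad : v ⬝ᵥ (Mᵀ * M) *ᵥ v = (M *ᵥ v) ⬝ᵥ (M *ᵥ v) := by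
    rw [← mulVec_mulVec, dotProduct_mulVec, vecMul_transpose]
  rw [euclNorm_sq, euclNorm_sq, ← hquad, hM, add_mulVec, one_mulVec, dotProduct_add]
  simpa using hP.dotProduct_mulVec_nonneg v

theorem one_le_l2OpNorm {M : Matrix (Fin k) (Fin k) ℝ} {v : Fin k → ℝ} (hv : 0 < euclNorm v)
    (h : euclNorm v ≤ euclNorm (M *ᵥ v)) : 1 ≤ l2OpNorm M :=
  le_of_mul_le_mul_right (by simpa using h.trans (euclNorm_mulVec_le M v)) hv

end EuclideanNorms

section Whitening
variable {k : ℕ} {Γ S : Matrix (Fin k) (Fin k) ℝ} (hΓ : Γ.PosDef) (hS : S.PosDef)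

theorem one_le_l2OpNorm_sqrt_mul_inv_sqrt (hD : (S - Γ).PosSemidef) {v : Fin k → ℝ}
    (hv : 0 < euclNorm v) : 1 ≤ l2OpNorm (hS.posSemidef.sqrt * hΓ.posSemidef.sqrt⁻¹) := by
  have hW := transpose_mul_inv_mul_mul_inv (A := hS.posSemidef.sqrt) (D := S - Γ)
    hΓ.isUnit_det_sqrt (by simp only [PosSemidef.transpose_sqrt, PosSemidef.sqrt_mul_self]; abel)
  have hP := hD.conjTranspose_mul_mul_same hΓ.posSemidef.sqrt⁻¹
  rw [conjTranspose_eq_transpose_of_trivial] at hP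
  exact one_le_l2OpNorm hv (euclNorm_le_euclNorm_mulVec hP hW v)

theorem euclNorm_inv_sqrt_mulVec_le (v : Fin k → ℝ) :
    euclNorm (hΓ.posSemidef.sqrt⁻¹ *ᵥ v) ≤
      l2OpNorm (hS.posSemidef.sqrt * hΓ.posSemidef.sqrt⁻¹) ^ 2 *
        euclNorm (hΓ.posSemidef.sqrt *ᵥ S⁻¹ *ᵥ v) := by
  set B := hΓ.posSemidef.sqrt
  set A := hS.posSemidef.sqrt
  have hB : IsUnit B.det := hΓ.isUnit_det_sqrt
  have hAA : A * A = S := hS.posSemidef.sqrt_mul_self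
  calc euclNorm (B⁻¹ *ᵥ v) = euclNorm ((B⁻¹ * A) *ᵥ (A * B⁻¹) *ᵥ B *ᵥ S⁻¹ *ᵥ v) := by
        conv_lhs => rw [inv_eq_inv_mul_mul_mul_inv_mul_mul_mul_inv
          hB hS.det_pos.ne'.isUnit hAA]
        simp only [mulVec_mulVec, Matrix.mul_assoc]
    _ ≤ l2OpNorm (B⁻¹ * A) * (l2OpNorm (A * B⁻¹) * euclNorm (B *ᵥ S⁻¹ *ᵥ v)) :=
        euclNorm_mulVec_mulVec_le _ _ _
    _ = l2OpNorm (A * B⁻¹) ^ 2 * euclNorm (B *ᵥ S⁻¹ *ᵥ v) := by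
        rw [← l2OpNorm_transpose (A * B⁻¹), transpose_mul, transpose_nonsing_inv,
          PosSemidef.transpose_sqrt, PosSemidef.transpose_sqrt]
        ring

theorem euclNorm_inv_sqrt_mul_inv_mulVec_le (v : Fin k → ℝ) :
    euclNorm (hΓ.posSemidef.sqrt⁻¹ *ᵥ (Γ * S⁻¹) *ᵥ v) ≤
      l2OpNorm (hS.posSemidef.sqrt⁻¹ * hΓ.posSemidef.sqrt) ^ 2 *
        euclNorm (hΓ.posSemidef.sqrt⁻¹ *ᵥ v) := by
  set B := hΓ.posSemidef.sqrt
  set A := hS.posSemidef.sqrt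
  have hB : IsUnit B.det := hΓ.isUnit_det_sqrt
  have hBB : B * B = Γ := hΓ.posSemidef.sqrt_mul_self
  have hAA : A * A = S := hS.posSemidef.sqrt_mul_self
  calc euclNorm (B⁻¹ *ᵥ (Γ * S⁻¹) *ᵥ v) = euclNorm ((B * A⁻¹) *ᵥ (A⁻¹ * B) *ᵥ B⁻¹ *ᵥ v) := by
        rw [mulVec_mulVec, inv_mul_mul_inv_eq hB hBB hAA]
        simp only [mulVec_mulVec, Matrix.mul_assoc]
    _ ≤ l2OpNorm (B * A⁻¹) * (l2OpNorm (A⁻¹ * B) * euclNorm (B⁻¹ *ᵥ v)) :=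
        euclNorm_mulVec_mulVec_le _ _ _
    _ = l2OpNorm (A⁻¹ * B) ^ 2 * euclNorm (B⁻¹ *ᵥ v) := by
        rw [← l2OpNorm_transpose (A⁻¹ * B), transpose_mul, transpose_nonsing_inv,
          PosSemidef.transpose_sqrt, PosSemidef.transpose_sqrt]
        ring

end Whitening

/-- deterministic content of Proposition 2: under conditions (1.47)-(1.49),
(a) `ρ < 1` and `τ > 1/ρ`; (b) `α = 1` satisfies the discrepancy condition; and (c) the
one-step updated mean `ū₁ = ū₀ + C₀ Gᵀ (G C₀ Gᵀ + Γ)⁻¹ (y − G ū₀)` satisfies the IR-ES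
stopping criterion `‖Γ^{-1/2}(y − G ū₁)‖ < τ η`.
(The hypothesis `hGCG` records that `G C₀ Gᵀ + Γ` is symmetric positive definite, which
follows from positive semidefiniteness of `C₀` and positive definiteness of `Γ`.) -/
theorem ires_linear_case {m n : ℕ}
    (G : Matrix (Fin m) (Fin n) ℝ) (Γ : Matrix (Fin m) (Fin m) ℝ)
    (C₀ : Matrix (Fin n) (Fin n) ℝ) (hΓ : Γ.PosDef) (hC₀ : C₀.PosSemidef)
    (hGCG : (G * C₀ * Gᵀ + Γ).PosDef)
    (y : Fin m → ℝ) (ubar₀ : Fin n → ℝ) (η : ℝ) (hη : 0 < η)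
    (h1 : euclNorm ((hΓ.posSemidef.sqrt)⁻¹ *ᵥ (y - G *ᵥ ubar₀)) > η)
    (ρ τ : ℝ) (h2 : 0 < ρ)
    (h2' : ρ < 1 / l2OpNorm (hGCG.posSemidef.sqrt * (hΓ.posSemidef.sqrt)⁻¹) ^ 2)
    (h3 : τ > max (l2OpNorm ((hGCG.posSemidef.sqrt)⁻¹ * hΓ.posSemidef.sqrt) ^ 2) (1 / ρ) *
      (euclNorm ((hΓ.posSemidef.sqrt)⁻¹ *ᵥ (y - G *ᵥ ubar₀)) / η)) :
    let ubar₁ : Fin n → ℝ :=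
      ubar₀ + (C₀ * Gᵀ * (G * C₀ * Gᵀ + Γ)⁻¹) *ᵥ (y - G *ᵥ ubar₀)
    (ρ < 1 ∧ τ > 1 / ρ) ∧
    ρ * euclNorm ((hΓ.posSemidef.sqrt)⁻¹ *ᵥ (y - G *ᵥ ubar₀)) ≤
      euclNorm (hΓ.posSemidef.sqrt *ᵥ (G * C₀ * Gᵀ + Γ)⁻¹ *ᵥ (y - G *ᵥ ubar₀)) ∧
    euclNorm ((hΓ.posSemidef.sqrt)⁻¹ *ᵥ (y - G *ᵥ ubar₁)) < τ * η := by
  intro ubar₁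
  set r := y - G *ᵥ ubar₀
  set N := euclNorm ((hΓ.posSemidef.sqrt)⁻¹ *ᵥ r)
  set K := l2OpNorm (hGCG.posSemidef.sqrt * (hΓ.posSemidef.sqrt)⁻¹)
  set L := l2OpNorm ((hGCG.posSemidef.sqrt)⁻¹ * hΓ.posSemidef.sqrt)
  have hN : 0 < N := hη.trans h1
  have hK : 1 ≤ K := one_le_l2OpNorm_sqrt_mul_inv_sqrt hΓ hGCG
    (by simpa using hC₀.mul_mul_conjTranspose_same G) hN
  have hρK : ρ * K ^ 2 < 1 := (lt_div_iff₀ (by positivity)).1 h2'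
  have hmax : 0 < max (L ^ 2) (1 / ρ) := lt_max_of_lt_right (by positivity)
  refine ⟨⟨by nlinarith, ?_⟩, ?_, ?_⟩
  · calc 1 / ρ ≤ max (L ^ 2) (1 / ρ) := le_max_right _ _
      _ < max (L ^ 2) (1 / ρ) * (N / η) := lt_mul_of_one_lt_right hmax ((one_lt_div hη).2 h1)
      _ < τ := h3
  · have := euclNorm_inv_sqrt_mulVec_le hΓ hGCG r
    nlinarith [euclNorm_nonneg ((hΓ.posSemidef.sqrt) *ᵥ (G * C₀ * Gᵀ + Γ)⁻¹ *ᵥ r)]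
  · rw [show y - G *ᵥ ubar₁ = _ from sub_mulVec_add_gain_mulVec hGCG.det_pos.ne'.isUnit y ubar₀]
    calc _ ≤ L ^ 2 * N := euclNorm_inv_sqrt_mul_inv_mulVec_le hΓ hGCG r
      _ ≤ max (L ^ 2) (1 / ρ) * (N / η) * η := by
        rw [mul_assoc, div_mul_cancel₀ _ hη.ne']
        gcongr
        exact le_max_left _ _
      _ < τ * η := by gcongr
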